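/- 4/3-approximation of GPA for OSSA: let ℓ be the allocation produced by the GPA policy with thresholds γ_i = min{1, p·c_i/(3·w_i)} for each i (interpreted as γ_i = 1 when w_i = 0). Then for every feasible offline allocation ℓ* (nonnegative, with Σ_i Σ_t ℓ*_i^t ≤ s), cost(ℓ) ≤ (4/3)·cost(ℓ*) + Σ_{i=1}^n 3p·(b_i + c_i). -/

import Mathlib

open Finset

/-- `stock b d ℓ t` is the post-replenishment stock `k^{t+1}` at a single site
(with `stock b d ℓ 0 = k^1 = b`), under demands `d` and allocations `ℓ`. -/
noncomputable def stock (b : ℕ) (d : ℕ → ℕ) (ℓ : ℕ → ℝ) : ℕ → ℝ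
  | 0 => (b : ℝ)
  | t + 1 => max (stock b d ℓ t - (d (t + 1) : ℝ)) 0 + ℓ (t + 1)

/-- Sitewise transport cost `Σ_{t=1}^T w_i ⌈ℓ_i^t / c_i⌉`. -/
noncomputable def transportCost (T : ℕ) (wi : ℝ) (ci : ℕ) (ℓ : ℕ → ℝ) : ℝ :=
  ∑ t ∈ Icc 1 T, wi * (⌈ℓ t / (ci : ℝ)⌉ : ℝ)

/-- Sitewise lost-sales penalty `Σ_{t=1}^T p (d_i^t − k_i^t)_+`. -/
noncomputable def penaltyCost (T : ℕ) (p : ℝ) (b : ℕ) (d : ℕ → ℕ) (ℓ : ℕ → ℝ) : ℝ :=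
  ∑ t ∈ Icc 1 T, p * max ((d t : ℝ) - stock b d ℓ (t - 1)) 0

/-- Total cost of an allocation. -/
noncomputable def totalCost {n : ℕ} (T : ℕ) (w : Fin n → ℝ) (c b : Fin n → ℕ)
    (p : ℝ) (d : Fin n → ℕ → ℕ) (ℓ : Fin n → ℕ → ℝ) : ℝ :=
  ∑ i, (transportCost T (w i) (c i) (ℓ i) + penaltyCost T p (b i) (d i) (ℓ i))

/-- One time step of GPA: eligible sites are processed in index order; site `i` is
eligible if `r i < b i` and `Lprev i ≤ γ i * Dt i`; an eligible site requests
`⌈(b i − r i)/c i⌉` full shipments and receives the min of that and the remaining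
hub supply. Returns the remaining supply and the per-site allocation. -/
noncomputable def gpaInner {n : ℕ} (b c : Fin n → ℕ) (γ : Fin n → ℝ)
    (Dt Lprev r : Fin n → ℕ) (rem : ℕ) : ℕ × (Fin n → ℕ) :=
  (List.finRange n).foldl
    (fun (st : ℕ × (Fin n → ℕ)) (i : Fin n) =>
      if r i < b i ∧ (Lprev i : ℝ) ≤ γ i * (Dt i : ℝ) then
        let q : ℕ := (b i - r i + c i - 1) / c i
        let give : ℕ := min st.1 (c i * q)
        (st.1 - give, Function.update st.2 i give)
      else st)
    (rem, fun _ => 0)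

/-- GPA state after `t` time steps: (remaining hub supply, current stocks `k^{t+1}`,
cumulative allocations `L^t`). Initially `(s, b, 0)`. -/
noncomputable def gpaState {n : ℕ} (b c : Fin n → ℕ) (γ : Fin n → ℝ)
    (d : Fin n → ℕ → ℕ) (s : ℕ) : ℕ → ℕ × (Fin n → ℕ) × (Fin n → ℕ)
  | 0 => (s, b, fun _ => 0)
  | t + 1 =>
    let st := gpaState b c γ d s t
    let r : Fin n → ℕ := fun i => st.2.1 i - d i (t + 1)
    let Dt : Fin n → ℕ := fun i => ∑ u ∈ Icc 1 (t + 1), d i u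
    let res := gpaInner b c γ Dt st.2.2 r st.1
    (res.1, fun i => r i + res.2 i, fun i => st.2.2 i + res.2 i)

/-- Cumulative GPA allocation `L_i^t`. -/
noncomputable def gpaL {n : ℕ} (b c : Fin n → ℕ) (γ : Fin n → ℝ)
    (d : Fin n → ℕ → ℕ) (s : ℕ) (i : Fin n) (t : ℕ) : ℕ :=
  (gpaState b c γ d s t).2.2 i

/-- Per-step GPA allocation `ℓ_i^t` (as a real number). -/
noncomputable def gpaAlloc {n : ℕ} (b c : Fin n → ℕ) (γ : Fin n → ℝ)
    (d : Fin n → ℕ → ℕ) (s : ℕ) (i : Fin n) (t : ℕ) : ℝ :=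
  ((gpaL b c γ d s i t - gpaL b c γ d s i (t - 1) : ℕ) : ℝ)

/-!
Fix a site and write `ω = w/c`, `D` for its total demand, `L` for GPA's total shipment to it
and `x` for the offline one. Flow conservation gives GPA's penalty as `p (D - b - L + k)` with
final stock `k ≤ b + c`, and its transport cost is `ω L` plus at most one partial truck (the one
that empties the hub); the offline cost is at least `ω x + p (D - b - x)₊`.

If the hub is emptied, `Σ L = s ≥ Σ x`, and the threshold caps `L ≤ γ D + b + c`, so the excess
transport `ω γ D ≤ p D / 3` is paid for by the penalty the offline solution saves. If the hub is
never emptied, every eligible site is fully replenished: after the last time the threshold blocks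
a site its stock stays at least `b`, which forces `L ≥ γ (D - 2b - c)`. With
`γ = min 1 (p/(3ω))` both cases close at ratio `4/3`, the second one because
`p (1 - γ) + ω γ ≤ 4ω/3` is `(2ω - p)² ≥ 0`.
-/

lemma natCast_sub_eq_max (a b : ℕ) : ((a - b : ℕ) : ℝ) = max ((a : ℝ) - b) 0 := by
  rcases le_total a b with h | h
  · simp [Nat.sub_eq_zero_of_le h, h]
  · rw [Nat.cast_sub h, max_eq_left (by simpa using h)]

lemma mul_ceil_div_le {w : ℝ} (hw : 0 ≤ w) {c : ℕ} (hc : 0 < c) (g : ℕ) :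
    w * ⌈(g : ℝ) / c⌉ ≤ w / c * g + if c ∣ g then 0 else w := by
  split_ifs with h
  · obtain ⟨m, rfl⟩ := h
    have : (c : ℝ) ≠ 0 := by positivity
    rw [Nat.cast_mul, mul_div_cancel_left₀ _ this, Int.ceil_natCast, Int.cast_natCast]
    field_simp
    simp
  · calc w * ⌈(g : ℝ) / c⌉ ≤ w * ((g : ℝ) / c + 1) :=
          mul_le_mul_of_nonneg_left (Int.ceil_lt_add_one _).le hw
      _ = _ := by ring

lemma sum_Icc_sub_pred {M : Type*} [AddCommGroup M] (f : ℕ → M) {a b : ℕ} (h : a ≤ b) :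
    ∑ t ∈ Icc (a + 1) b, (f t - f (t - 1)) = f b - f a := by
  induction b, h using Nat.le_induction with
  | base => simp
  | succ b hab ih => rw [sum_Icc_succ_top (by omega), ih]; simp

def cumDemand (d : ℕ → ℕ) (t : ℕ) : ℕ := ∑ u ∈ Icc 1 t, d u

noncomputable def siteCost (T : ℕ) (w : ℝ) (c : ℕ) (p : ℝ) (b : ℕ) (d : ℕ → ℕ) (f : ℕ → ℝ) : ℝ :=
  transportCost T w c f + penaltyCost T p b d f

lemma totalCost_eq_sum_siteCost {n : ℕ} (T : ℕ) (w : Fin n → ℝ) (c b : Fin n → ℕ) (p : ℝ)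
    (d : Fin n → ℕ → ℕ) (ℓ : Fin n → ℕ → ℝ) :
    totalCost T w c b p d ℓ = ∑ i, siteCost T (w i) (c i) p (b i) (d i) (ℓ i) := rfl

section Inventory

variable {b : ℕ} {d : ℕ → ℕ} {f : ℕ → ℝ}

lemma cumDemand_succ (t : ℕ) : cumDemand d (t + 1) = cumDemand d t + d (t + 1) :=
  sum_Icc_succ_top (by omega) _

lemma cumDemand_sub_cumDemand {a T : ℕ} (h : a ≤ T) :
    (cumDemand d T : ℝ) - cumDemand d a = ∑ t ∈ Icc (a + 1) T, (d t : ℝ) := by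
  rw [← sum_Icc_sub_pred (fun t => (cumDemand d t : ℝ)) h]
  refine sum_congr rfl fun t ht => ?_
  obtain ⟨u, rfl⟩ : ∃ u, t = u + 1 := ⟨t - 1, by have := (mem_Icc.1 ht).1; omega⟩
  simp [cumDemand_succ]

lemma stock_succ (t : ℕ) :
    stock b d f (t + 1) = max (stock b d f t - d (t + 1)) 0 + f (t + 1) := rfl

lemma stock_nonneg {T : ℕ} (hf : ∀ t ∈ Icc 1 T, 0 ≤ f t) {t : ℕ} (ht : t ≤ T) :
    0 ≤ stock b d f t := by
  induction t with
  | zero => exact Nat.cast_nonneg b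
  | succ t _ =>
    rw [stock_succ]
    exact add_nonneg (le_max_right _ _) (hf _ (mem_Icc.2 ⟨by omega, ht⟩))

lemma max_sub_stock_eq (t : ℕ) :
    max ((d (t + 1) : ℝ) - stock b d f t) 0
      = d (t + 1) - f (t + 1) + (stock b d f (t + 1) - stock b d f t) := by
  rw [stock_succ]
  rcases le_total (stock b d f t) (d (t + 1)) with h | h
  · rw [max_eq_left (sub_nonneg.2 h), max_eq_right (sub_nonpos.2 h)]; ring
  · rw [max_eq_right (sub_nonpos.2 h), max_eq_left (sub_nonneg.2 h)]; ring

lemma sum_max_sub_stock_Icc {a T : ℕ} (h : a ≤ T) :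
    ∑ t ∈ Icc (a + 1) T, max ((d t : ℝ) - stock b d f (t - 1)) 0
      = ∑ t ∈ Icc (a + 1) T, ((d t : ℝ) - f t) + (stock b d f T - stock b d f a) := by
  rw [← sum_Icc_sub_pred (stock b d f) h, ← sum_add_distrib]
  refine sum_congr rfl fun t ht => ?_
  obtain ⟨u, rfl⟩ : ∃ u, t = u + 1 := ⟨t - 1, by have := (mem_Icc.1 ht).1; omega⟩
  exact max_sub_stock_eq u

lemma penaltyCost_eq (T : ℕ) (p : ℝ) :
    penaltyCost T p b d f = p * (cumDemand d T - ∑ t ∈ Icc 1 T, f t + stock b d f T - b) := by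
  have h := sum_max_sub_stock_Icc (b := b) (d := d) (f := f) (Nat.zero_le T)
  rw [zero_add, sum_sub_distrib] at h
  rw [penaltyCost, ← mul_sum, h, cumDemand, Nat.cast_sum]
  simp only [stock]
  ring

lemma penaltyCost_nonneg {T : ℕ} {p : ℝ} (hp : 0 ≤ p) : 0 ≤ penaltyCost T p b d f :=
  sum_nonneg fun _ _ => mul_nonneg hp (le_max_right _ _)

lemma div_mul_sum_le_transportCost {T : ℕ} {w : ℝ} {c : ℕ} (hw : 0 ≤ w) :
    w / c * ∑ t ∈ Icc 1 T, f t ≤ transportCost T w c f := by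
  rw [transportCost, mul_sum]
  refine sum_le_sum fun t _ => ?_
  rw [div_mul_eq_mul_div, mul_div_assoc]
  exact mul_le_mul_of_nonneg_left (Int.le_ceil _) hw

lemma le_siteCost {T : ℕ} {w p : ℝ} {c : ℕ} (hw : 0 ≤ w) (hp : 0 ≤ p)
    (hf : ∀ t ∈ Icc 1 T, 0 ≤ f t) :
    w / c * ∑ t ∈ Icc 1 T, f t + p * max (cumDemand d T - b - ∑ t ∈ Icc 1 T, f t) 0
      ≤ siteCost T w c p b d f := by
  refine add_le_add (div_mul_sum_le_transportCost hw) ?_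
  rw [mul_max_of_nonneg _ _ hp, mul_zero]
  refine max_le ?_ (penaltyCost_nonneg hp)
  rw [penaltyCost_eq]
  have := stock_nonneg (b := b) (d := d) hf le_rfl
  nlinarith

end Inventory

section GreedyGrant

variable {ι : Type*} [DecidableEq ι] (P : ι → Prop) [DecidablePred P] (g : ι → ℕ)

def grantStep (st : ℕ × (ι → ℕ)) (i : ι) : ℕ × (ι → ℕ) :=
  if P i then (st.1 - min st.1 (g i), Function.update st.2 i (min st.1 (g i))) else st

lemma foldl_grantStep_snd_le (l : List ι) (st : ℕ × (ι → ℕ)) {j : ι}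
    (h : st.2 j ≤ if P j then g j else 0) :
    (l.foldl (grantStep P g) st).2 j ≤ if P j then g j else 0 := by
  induction l generalizing st with
  | nil => exact h
  | cons i l ih =>
    refine ih _ ?_
    unfold grantStep
    by_cases hi : P i
    · rcases eq_or_ne j i with rfl | hji
      · simp [hi]
      · simpa [hi, hji] using h
    · simpa [hi] using h

lemma foldl_grantStep_full_or_empty (l : List ι) (st : ℕ × (ι → ℕ)) {j : ι} (hj : P j)
    (h : j ∈ l ∨ st.2 j = g j ∨ st.1 = 0) :
    (l.foldl (grantStep P g) st).2 j = g j ∨ (l.foldl (grantStep P g) st).1 = 0 := by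
  induction l generalizing st with
  | nil => simpa using h
  | cons i l ih =>
    refine ih _ ?_
    rcases em (j ∈ l) with hl | hl
    · exact Or.inl hl
    right
    unfold grantStep
    by_cases hi : P i
    · rcases eq_or_ne j i with rfl | hji
      · simp only [hi, if_true, Function.update_self]
        omega
      · simp only [hi, if_true, Function.update_of_ne hji]
        simp [hl, hji] at h
        omega
    · rcases eq_or_ne j i with rfl | hji
      · exact absurd hj hi
      · simpa [hi, hl, hji] using h

lemma foldl_grantStep_fst_add_sum [Fintype ι] (l : List ι) (hl : l.Nodup) (st : ℕ × (ι → ℕ))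
    (h : ∀ j ∈ l, st.2 j = 0) :
    (l.foldl (grantStep P g) st).1 + ∑ j, (l.foldl (grantStep P g) st).2 j
      = st.1 + ∑ j, st.2 j := by
  induction l generalizing st with
  | nil => rfl
  | cons i l ih =>
    rw [List.nodup_cons] at hl
    rw [List.foldl_cons, ih hl.2]
    · unfold grantStep
      split_ifs
      · rw [sum_update_of_mem (mem_univ i), ← add_sum_erase _ _ (mem_univ i),
          h i List.mem_cons_self, sdiff_singleton_eq_erase]
        have := min_le_left st.1 (g i)
        omega
      · rfl
    · intro j hj
      have hji : j ≠ i := fun e => hl.1 (e ▸ hj)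
      unfold grantStep
      split_ifs
      · simpa [hji] using h j (List.mem_cons_of_mem _ hj)
      · exact h j (List.mem_cons_of_mem _ hj)

end GreedyGrant

section GPA

variable {n : ℕ} (b c : Fin n → ℕ) (γ : Fin n → ℝ) (d : Fin n → ℕ → ℕ) (s : ℕ)

noncomputable def gpaSupply (t : ℕ) : ℕ := (gpaState b c γ d s t).1

noncomputable def gpaStock (t : ℕ) (i : Fin n) : ℕ := (gpaState b c γ d s t).2.1 i

-- `r_i^{t+1}`; truncated subtraction is the paper's `(k - d)_+`.
noncomputable def gpaResidual (t : ℕ) (i : Fin n) : ℕ := gpaStock b c γ d s t i - d i (t + 1)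

def gpaRequest (r : Fin n → ℕ) (i : Fin n) : ℕ := c i * ((b i - r i + c i - 1) / c i)

abbrev GpaEligible (t : ℕ) (i : Fin n) : Prop :=
  gpaResidual b c γ d s t i < b i ∧ (gpaL b c γ d s i t : ℝ) ≤ γ i * cumDemand (d i) (t + 1)

noncomputable def gpaStep (t : ℕ) : ℕ × (Fin n → ℕ) :=
  gpaInner b c γ (fun i => cumDemand (d i) (t + 1)) (fun i => gpaL b c γ d s i t)
    (gpaResidual b c γ d s t) (gpaSupply b c γ d s t)

lemma gpaStep_eq_foldl (t : ℕ) :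
    gpaStep b c γ d s t = (List.finRange n).foldl
      (grantStep (GpaEligible b c γ d s t) (gpaRequest b c (gpaResidual b c γ d s t)))
      (gpaSupply b c γ d s t, 0) := rfl

lemma gpaSupply_succ (t : ℕ) : gpaSupply b c γ d s (t + 1) = (gpaStep b c γ d s t).1 := rfl

lemma gpaStock_succ (t : ℕ) (i : Fin n) :
    gpaStock b c γ d s (t + 1) i = gpaResidual b c γ d s t i + (gpaStep b c γ d s t).2 i := rfl

lemma gpaL_zero (i : Fin n) : gpaL b c γ d s i 0 = 0 := rfl

lemma gpaL_succ (i : Fin n) (t : ℕ) :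
    gpaL b c γ d s i (t + 1) = gpaL b c γ d s i t + (gpaStep b c γ d s t).2 i := rfl

lemma gpaAlloc_succ (i : Fin n) (t : ℕ) :
    gpaAlloc b c γ d s i (t + 1) = (gpaStep b c γ d s t).2 i := by
  rw [gpaAlloc, Nat.add_sub_cancel, gpaL_succ, Nat.add_sub_cancel_left]

lemma gpaStep_snd_le (t : ℕ) (i : Fin n) :
    (gpaStep b c γ d s t).2 i
      ≤ if GpaEligible b c γ d s t i then gpaRequest b c (gpaResidual b c γ d s t) i else 0 := by
  rw [gpaStep_eq_foldl]
  exact foldl_grantStep_snd_le _ _ _ _ (by simp)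

lemma gpaStep_snd_eq_zero_of_not_eligible {t : ℕ} {i : Fin n}
    (h : ¬ GpaEligible b c γ d s t i) : (gpaStep b c γ d s t).2 i = 0 := by
  simpa [h] using gpaStep_snd_le b c γ d s t i

lemma gpaStep_snd_le_gpaRequest (t : ℕ) (i : Fin n) :
    (gpaStep b c γ d s t).2 i ≤ gpaRequest b c (gpaResidual b c γ d s t) i :=
  (gpaStep_snd_le b c γ d s t i).trans (by split <;> simp)

lemma gpaStep_full_or_empty {t : ℕ} {i : Fin n} (h : GpaEligible b c γ d s t i) :
    (gpaStep b c γ d s t).2 i = gpaRequest b c (gpaResidual b c γ d s t) i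
      ∨ gpaSupply b c γ d s (t + 1) = 0 := by
  rw [gpaSupply_succ, gpaStep_eq_foldl]
  exact foldl_grantStep_full_or_empty _ _ _ _ h (Or.inl (List.mem_finRange i))

lemma gpaSupply_succ_add_sum (t : ℕ) :
    gpaSupply b c γ d s (t + 1) + ∑ i, (gpaStep b c γ d s t).2 i = gpaSupply b c γ d s t := by
  rw [gpaSupply_succ, gpaStep_eq_foldl,
    foldl_grantStep_fst_add_sum _ _ _ (List.nodup_finRange n) _ (fun _ _ => rfl)]
  simp

lemma gpaStep_snd_eq_zero_of_gpaSupply_eq_zero {t : ℕ} (h : gpaSupply b c γ d s t = 0)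
    (i : Fin n) : (gpaStep b c γ d s t).2 i = 0 := by
  have := gpaSupply_succ_add_sum b c γ d s t
  rw [h, Nat.add_eq_zero_iff, sum_eq_zero_iff] at this
  exact this.2 i (mem_univ i)

lemma gpaSupply_antitone : Antitone (gpaSupply b c γ d s) :=
  antitone_nat_of_succ_le fun t => by have := gpaSupply_succ_add_sum b c γ d s t; omega

lemma gpaSupply_add_sum_gpaL (t : ℕ) : gpaSupply b c γ d s t + ∑ i, gpaL b c γ d s i t = s := by
  induction t with
  | zero => simp [gpaSupply, gpaL, gpaState]
  | succ t ih =>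
    simp only [gpaL_succ, sum_add_distrib]
    have := gpaSupply_succ_add_sum b c γ d s t
    omega

lemma gpaL_monotone (i : Fin n) : Monotone (gpaL b c γ d s i) :=
  monotone_nat_of_le_succ fun t => by rw [gpaL_succ]; omega

lemma sub_le_gpaRequest {r : Fin n → ℕ} {i : Fin n} (hc : 1 ≤ c i) :
    b i - r i ≤ gpaRequest b c r i := by
  have h1 := Nat.div_add_mod (b i - r i + c i - 1) (c i)
  have h2 := Nat.mod_lt (b i - r i + c i - 1) hc
  unfold gpaRequest
  omega

lemma gpaRequest_le (r : Fin n → ℕ) (i : Fin n) :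
    gpaRequest b c r i ≤ b i - r i + c i - 1 := by
  rw [gpaRequest, mul_comm]
  exact Nat.div_mul_le_self _ _

lemma gpaStep_snd_le_add (t : ℕ) (i : Fin n) : (gpaStep b c γ d s t).2 i ≤ b i + c i := by
  have := gpaRequest_le b c (gpaResidual b c γ d s t) i
  have := gpaStep_snd_le_gpaRequest b c γ d s t i
  omega

lemma gpaStock_le (t : ℕ) (i : Fin n) : gpaStock b c γ d s t i ≤ b i + c i := by
  induction t with
  | zero => exact Nat.le_add_right _ _
  | succ t ih =>
    rw [gpaStock_succ]
    by_cases h : GpaEligible b c γ d s t i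
    · have := gpaRequest_le b c (gpaResidual b c γ d s t) i
      have := gpaStep_snd_le_gpaRequest b c γ d s t i
      have := h.1
      omega
    · rw [gpaStep_snd_eq_zero_of_not_eligible b c γ d s h]
      unfold gpaResidual
      omega

lemma stock_gpaAlloc (i : Fin n) (t : ℕ) :
    stock (b i) (d i) (gpaAlloc b c γ d s i) t = gpaStock b c γ d s t i := by
  induction t with
  | zero => rfl
  | succ t ih =>
    rw [stock_succ, ih, gpaAlloc_succ, gpaStock_succ, gpaResidual, Nat.cast_add,
      natCast_sub_eq_max]

lemma sum_gpaAlloc_Icc (i : Fin n) {a T : ℕ} (h : a ≤ T) :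
    ∑ t ∈ Icc (a + 1) T, gpaAlloc b c γ d s i t
      = (gpaL b c γ d s i T : ℝ) - gpaL b c γ d s i a := by
  rw [← sum_Icc_sub_pred (fun t => (gpaL b c γ d s i t : ℝ)) h]
  refine sum_congr rfl fun t ht => ?_
  obtain ⟨u, rfl⟩ : ∃ u, t = u + 1 := ⟨t - 1, by have := (mem_Icc.1 ht).1; omega⟩
  simp [gpaAlloc_succ, gpaL_succ]

end GPA

section GPABounds

variable {n : ℕ} (b c : Fin n → ℕ) (γ : Fin n → ℝ) (d : Fin n → ℕ → ℕ) (s : ℕ)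

lemma penaltyCost_gpaAlloc (p : ℝ) (i : Fin n) (T : ℕ) :
    penaltyCost T p (b i) (d i) (gpaAlloc b c γ d s i)
      = p * (cumDemand (d i) T - gpaL b c γ d s i T + gpaStock b c γ d s T i - b i) := by
  have h := sum_gpaAlloc_Icc b c γ d s i (Nat.zero_le T)
  rw [zero_add, gpaL_zero, Nat.cast_zero, sub_zero] at h
  rw [penaltyCost_eq, stock_gpaAlloc, h]

lemma gpaL_le (i : Fin n) (hγ : 0 ≤ γ i) (t : ℕ) :
    (gpaL b c γ d s i t : ℝ) ≤ γ i * cumDemand (d i) t + (b i + c i) := by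
  induction t with
  | zero => simp only [gpaL_zero, cumDemand, Nat.cast_zero]; positivity
  | succ t ih =>
    have hD : (cumDemand (d i) t : ℝ) ≤ cumDemand (d i) (t + 1) := by
      rw [cumDemand_succ]; exact_mod_cast Nat.le_add_right _ _
    rw [gpaL_succ, Nat.cast_add]
    by_cases h : GpaEligible b c γ d s t i
    · have : ((gpaStep b c γ d s t).2 i : ℝ) ≤ b i + c i := by
        exact_mod_cast gpaStep_snd_le_add b c γ d s t i
      linarith [h.2]
    · rw [gpaStep_snd_eq_zero_of_not_eligible b c γ d s h, Nat.cast_zero, add_zero]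
      linarith [mul_le_mul_of_nonneg_left hD hγ]

lemma gpaStep_snd_eq_gpaRequest {T t : ℕ} {i : Fin n} (hT : gpaSupply b c γ d s T ≠ 0)
    (ht : t < T) (h : GpaEligible b c γ d s t i) :
    (gpaStep b c γ d s t).2 i = gpaRequest b c (gpaResidual b c γ d s t) i :=
  (gpaStep_full_or_empty b c γ d s h).resolve_right fun h0 =>
    hT (Nat.eq_zero_of_le_zero (h0 ▸ gpaSupply_antitone b c γ d s (Nat.succ_le_of_lt ht)))

lemma le_gpaStock_succ {T t : ℕ} {i : Fin n} (hT : gpaSupply b c γ d s T ≠ 0) (ht : t < T)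
    (hc : 1 ≤ c i) (hunb : (gpaL b c γ d s i t : ℝ) ≤ γ i * cumDemand (d i) (t + 1)) :
    b i ≤ gpaStock b c γ d s (t + 1) i := by
  rw [gpaStock_succ]
  by_cases hr : gpaResidual b c γ d s t i < b i
  · rw [gpaStep_snd_eq_gpaRequest b c γ d s hT ht ⟨hr, hunb⟩]
    have := sub_le_gpaRequest b c (r := gpaResidual b c γ d s t) (i := i) hc
    omega
  · omega

lemma sum_max_sub_gpaStock_le {T t₀ : ℕ} {i : Fin n} (hT : gpaSupply b c γ d s T ≠ 0)
    (hc : 1 ≤ c i) (hd : ∀ t ∈ Icc 1 T, d i t ≤ b i)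
    (hunb : ∀ t, t₀ ≤ t → t < T → (gpaL b c γ d s i t : ℝ) ≤ γ i * cumDemand (d i) (t + 1)) :
    ∑ t ∈ Icc (t₀ + 1) T, max ((d i t : ℝ) - gpaStock b c γ d s (t - 1) i) 0 ≤ b i := by
  -- From time `t₀ + 1` on the stock is at least `b ≥ d`, so only period `t₀ + 1` loses sales.
  calc _ ≤ ∑ t ∈ Icc (t₀ + 1) T, if t = t₀ + 1 then (b i : ℝ) else 0 :=
        sum_le_sum fun t ht => ?_
    _ ≤ b i := by rw [sum_ite_eq']; split <;> simp
  obtain ⟨ht₁, htT⟩ := mem_Icc.1 ht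
  have hdt : (d i t : ℝ) ≤ b i := by exact_mod_cast hd t (mem_Icc.2 ⟨by omega, htT⟩)
  split_ifs with h
  · exact max_le (by linarith [(gpaStock b c γ d s (t - 1) i).cast_nonneg (α := ℝ)]) (by simp)
  · obtain ⟨u, rfl⟩ : ∃ u, t = u + 2 := ⟨t - 2, by omega⟩
    have : (b i : ℝ) ≤ gpaStock b c γ d s (u + 1) i := by
      exact_mod_cast le_gpaStock_succ b c γ d s hT (by omega) hc (hunb u (by omega) (by omega))
    rw [show u + 2 - 1 = u + 1 by omega, max_eq_right (by linarith)]

lemma cumDemand_sub_le_of_unblocked {T t₀ : ℕ} {i : Fin n} (ht₀ : t₀ ≤ T)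
    (hT : gpaSupply b c γ d s T ≠ 0) (hc : 1 ≤ c i) (hd : ∀ t ∈ Icc 1 T, d i t ≤ b i)
    (hunb : ∀ t, t₀ ≤ t → t < T → (gpaL b c γ d s i t : ℝ) ≤ γ i * cumDemand (d i) (t + 1)) :
    (cumDemand (d i) T : ℝ) - cumDemand (d i) t₀
      ≤ gpaL b c γ d s i T - gpaL b c γ d s i t₀ + (2 * b i + c i) := by
  have h := sum_max_sub_stock_Icc (b := b i) (d := d i) (f := gpaAlloc b c γ d s i) ht₀
  simp only [stock_gpaAlloc] at h
  rw [sum_sub_distrib, sum_gpaAlloc_Icc b c γ d s i ht₀, ← cumDemand_sub_cumDemand ht₀] at h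
  have := sum_max_sub_gpaStock_le b c γ d s hT hc hd hunb
  have : (gpaStock b c γ d s t₀ i : ℝ) ≤ b i + c i := by exact_mod_cast gpaStock_le b c γ d s t₀ i
  have := (gpaStock b c γ d s T i).cast_nonneg (α := ℝ)
  linarith

lemma le_gpaL_of_gpaSupply_ne_zero {T : ℕ} {i : Fin n} (hT : gpaSupply b c γ d s T ≠ 0)
    (hc : 1 ≤ c i) (hγ₀ : 0 ≤ γ i) (hγ₁ : γ i ≤ 1) (hd : ∀ t ∈ Icc 1 T, d i t ≤ b i) :
    γ i * cumDemand (d i) T ≤ gpaL b c γ d s i T + γ i * (2 * b i + c i) := by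
  classical
  -- `t₀` is the last time at which the threshold blocks site `i` (or `0`); from then on every
  -- shortfall is refilled in full.
  let Blocked (t : ℕ) : Prop := t = 0 ∨ γ i * cumDemand (d i) t < gpaL b c γ d s i (t - 1)
  set t₀ := Nat.findGreatest Blocked T
  have ht₀ : t₀ ≤ T := Nat.findGreatest_le T
  have hstart : γ i * cumDemand (d i) t₀ ≤ gpaL b c γ d s i t₀ := by
    rcases Nat.findGreatest_spec (P := Blocked) (Nat.zero_le T) (Or.inl rfl) with h | h
    · rw [show t₀ = 0 from h]; simp [cumDemand, gpaL_zero]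
    · exact h.le.trans (by exact_mod_cast gpaL_monotone b c γ d s i (Nat.sub_le t₀ 1))
  have hunb : ∀ t, t₀ ≤ t → t < T → (gpaL b c γ d s i t : ℝ) ≤ γ i * cumDemand (d i) (t + 1) :=
    fun t h₁ h₂ => by
      simpa [Blocked] using Nat.findGreatest_is_greatest (P := Blocked) (Nat.lt_succ_of_le h₁) h₂
  have hD := mul_le_mul_of_nonneg_left
    (cumDemand_sub_le_of_unblocked b c γ d s ht₀ hT hc hd hunb) hγ₀
  have hL : (gpaL b c γ d s i t₀ : ℝ) ≤ gpaL b c γ d s i T := by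
    exact_mod_cast gpaL_monotone b c γ d s i ht₀
  have := mul_le_of_le_one_left (sub_nonneg.2 hL) hγ₁
  nlinarith

lemma gpaSupply_succ_eq_zero_of_not_dvd {t : ℕ} {i : Fin n}
    (h : ¬ c i ∣ (gpaStep b c γ d s t).2 i) : gpaSupply b c γ d s (t + 1) = 0 := by
  by_cases he : GpaEligible b c γ d s t i
  · exact (gpaStep_full_or_empty b c γ d s he).resolve_left fun hg => h (hg ▸ dvd_mul_right _ _)
  · exact absurd (gpaStep_snd_eq_zero_of_not_eligible b c γ d s he ▸ dvd_zero _) h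

-- The indicator pays for the one partial truck, sent in the step that empties the hub.
lemma transportCost_gpaAlloc_le {w : ℝ} (hw : 0 ≤ w) {i : Fin n} (hc : 1 ≤ c i) (T : ℕ) :
    transportCost T w (c i) (gpaAlloc b c γ d s i)
      ≤ w / c i * gpaL b c γ d s i T + if gpaSupply b c γ d s T = 0 then w else 0 := by
  induction T with
  | zero => simp only [transportCost]; positivity
  | succ T ih =>
    rw [transportCost, sum_Icc_succ_top (by omega), ← transportCost, gpaAlloc_succ, gpaL_succ,
      Nat.cast_add, mul_add]
    have hstep := mul_ceil_div_le hw hc ((gpaStep b c γ d s T).2 i)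
    by_cases hdvd : c i ∣ (gpaStep b c γ d s T).2 i
    · have hmono : gpaSupply b c γ d s T = 0 → gpaSupply b c γ d s (T + 1) = 0 := fun h =>
        Nat.eq_zero_of_le_zero (h ▸ gpaSupply_antitone b c γ d s (Nat.le_succ T))
      have hite : (if gpaSupply b c γ d s T = 0 then w else 0)
          ≤ if gpaSupply b c γ d s (T + 1) = 0 then w else 0 := by
        split_ifs with h₁ h₂ <;> first | linarith | exact absurd (hmono h₁) h₂
      rw [if_pos hdvd] at hstep
      linarith
    · have h₀ : gpaSupply b c γ d s T ≠ 0 := fun h =>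
        hdvd (gpaStep_snd_eq_zero_of_gpaSupply_eq_zero b c γ d s h i ▸ dvd_zero _)
      rw [if_neg hdvd] at hstep
      rw [if_neg h₀] at ih
      rw [if_pos (gpaSupply_succ_eq_zero_of_not_dvd b c γ d s hdvd)]
      linarith

lemma siteCost_gpaAlloc_le {w p : ℝ} (hw : 0 ≤ w) (hp : 0 ≤ p) {i : Fin n} (hc : 1 ≤ c i)
    (T : ℕ) :
    siteCost T w (c i) p (b i) (d i) (gpaAlloc b c γ d s i)
      ≤ w / c i * gpaL b c γ d s i T + w
        + p * (cumDemand (d i) T - gpaL b c γ d s i T + c i) := by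
  have ht := transportCost_gpaAlloc_le b c γ d s hw hc T
  have hite : (if gpaSupply b c γ d s T = 0 then w else 0) ≤ w := by split <;> linarith
  have hK : (gpaStock b c γ d s T i : ℝ) ≤ b i + c i := by exact_mod_cast gpaStock_le b c γ d s T i
  rw [siteCost, penaltyCost_gpaAlloc]
  nlinarith [mul_le_mul_of_nonneg_left hK hp]

end GPABounds

lemma gpaThreshold_spec {w p c γ : ℝ} (hw : 0 ≤ w) (hp : 0 ≤ p) (hc : 0 < c)
    (hγ : γ = if w = 0 then 1 else min 1 (p * c / (3 * w))) :
    0 ≤ γ ∧ γ ≤ 1 ∧ 3 * (w / c) * γ ≤ p ∧ p * (1 - γ) + w / c * γ ≤ 4 / 3 * (w / c) := by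
  rcases eq_or_lt_of_le hw with rfl | hw₀
  · simp [hγ, hp]
  have hω : 0 < w / c := div_pos hw₀ hc
  rcases le_total 1 (p * c / (3 * w)) with h | h
  · rw [hγ, if_neg hw₀.ne', min_eq_left h]
    rw [le_div_iff₀ (by positivity)] at h
    have : 3 * (w / c) ≤ p := by rw [mul_div_assoc', div_le_iff₀ hc]; linarith
    refine ⟨zero_le_one, le_rfl, by linarith, by linarith⟩
  · rw [if_neg hw₀.ne', min_eq_right h] at hγ
    have h3 : 3 * (w / c) * γ = p := by rw [hγ]; field_simp
    refine ⟨hγ ▸ by positivity, hγ ▸ h, h3.le, ?_⟩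
    nlinarith [sq_nonneg (2 * (w / c) - p)]

lemma cost_ineq_of_alloc_le {ω γ w p b c D L x : ℝ} (hω : 0 ≤ ω) (hωp : ω ≤ p) (hγ₀ : 0 ≤ γ)
    (hγ₁ : γ ≤ 1) (hγ : 3 * ω * γ ≤ p) (hw : w ≤ p * c) (hb : 0 ≤ b) (hc : 0 ≤ c)
    (hx : 0 ≤ x) (hL : L ≤ γ * D + (b + c)) :
    ω * L + w + p * (D - L + c) + p * L
      ≤ 4 / 3 * (ω * x + p * max (D - b - x) 0) + p * x + 3 * p * (b + c) := by
  have hωγ : 0 ≤ ω * γ := mul_nonneg hω hγ₀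
  have h₁ : ω * L ≤ ω * γ * D + ω * (b + c) := by nlinarith [mul_le_mul_of_nonneg_left hL hω]
  have h₂ : ω * (b + c) ≤ p * (b + c) := mul_le_mul_of_nonneg_right hωp (by linarith)
  have h₃ : ω * γ * b ≤ p / 3 * b := mul_le_mul_of_nonneg_right (by linarith) hb
  rcases le_total (D - b) x with hDx | hDx
  · have h₄ : ω * γ * D ≤ ω * γ * x + ω * γ * b := by nlinarith [mul_le_mul_of_nonneg_left hDx hωγ]
    have h₅ : ω * γ * x ≤ ω * x := by nlinarith [mul_le_mul_of_nonneg_left hγ₁ (mul_nonneg hω hx)]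
    have h₆ : p * D ≤ p * x + p * b := by nlinarith [mul_le_mul_of_nonneg_left hDx (hω.trans hωp)]
    have := le_max_right (D - b - x) 0
    nlinarith [mul_nonneg hω hx, mul_nonneg (hω.trans hωp) (le_max_right (D - b - x) 0)]
  · rw [max_eq_left (by linarith)]
    have core : (ω * γ - p / 3) * (D - b) ≤ (4 / 3 * ω - p / 3) * x := by
      rcases le_total p (4 * ω) with hp4 | hp4
      · nlinarith [mul_nonneg hx hx, mul_le_mul_of_nonneg_right (show ω * γ - p / 3 ≤ 0 by linarith)
          (show 0 ≤ D - b by linarith)]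
      · have := mul_le_mul_of_nonneg_right (mul_le_of_le_one_right hω hγ₁) (hx.trans hDx)
        nlinarith [mul_le_mul_of_nonpos_left hDx (show ω - p / 3 ≤ 0 by linarith), mul_nonneg hω hx]
    nlinarith

lemma cost_ineq_of_le_alloc {ω γ w p b c D L x : ℝ} (hω : 0 ≤ ω) (hωp : ω ≤ p) (hγ₀ : 0 ≤ γ)
    (hγ₁ : γ ≤ 1) (hγ : p * (1 - γ) + ω * γ ≤ 4 / 3 * ω) (hw : w ≤ p * c) (hb : 0 ≤ b)
    (hc : 0 ≤ c) (hx : 0 ≤ x) (hL : γ * D ≤ L + γ * (2 * b + c)) :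
    ω * L + w + p * (D - L + c) ≤ 4 / 3 * (ω * x + p * max (D - b - x) 0) + 3 * p * (b + c) := by
  set m := p * (1 - γ) + ω * γ
  set E := max (D - b) 0
  have hm₀ : 0 ≤ m := by nlinarith
  have hmp : m ≤ p := by nlinarith
  have h₁ : (p - ω) * (γ * D - γ * (2 * b + c)) ≤ (p - ω) * L :=
    mul_le_mul_of_nonneg_left (by linarith) (by linarith)
  have h₂ : (p - ω) * γ * (2 * b + c) ≤ p * (2 * b + c) :=
    mul_le_mul_of_nonneg_right (by nlinarith) (by linarith)
  have h₃ : m * (D - b) ≤ m * E := mul_le_mul_of_nonneg_left (le_max_left _ _) hm₀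
  have h₄ : m * E ≤ 4 / 3 * ω * E := mul_le_mul_of_nonneg_right hγ (le_max_right _ _)
  have h₅ : ω * E ≤ ω * x + p * max (D - b - x) 0 := by
    have hE : E ≤ x + max (D - b - x) 0 := max_le (by linarith [le_max_left (D - b - x) 0])
      (by linarith [le_max_right (D - b - x) 0])
    nlinarith [mul_le_mul_of_nonneg_left hE hω,
      mul_le_mul_of_nonneg_right hωp (le_max_right (D - b - x) 0)]
  have h₆ : m * b ≤ p * b := mul_le_mul_of_nonneg_right hmp hb
  nlinarith

section SiteBounds

variable {n : ℕ} (b c : Fin n → ℕ) (γ : Fin n → ℝ) (d : Fin n → ℕ → ℕ) (s : ℕ)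

lemma siteCost_gpaAlloc_add_le {w p x : ℝ} {i : Fin n} (hw : 0 ≤ w) (hp : 0 ≤ p)
    (hwp : w ≤ p * c i) (hc : 1 ≤ c i) (hγ₀ : 0 ≤ γ i) (hγ₁ : γ i ≤ 1)
    (hγ : 3 * (w / c i) * γ i ≤ p) (hx : 0 ≤ x) (T : ℕ) :
    siteCost T w (c i) p (b i) (d i) (gpaAlloc b c γ d s i) + p * gpaL b c γ d s i T
      ≤ 4 / 3 * (w / c i * x + p * max (cumDemand (d i) T - b i - x) 0) + p * x
        + 3 * p * (b i + c i) := by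
  have hcR : (0 : ℝ) < c i := by exact_mod_cast hc
  have := cost_ineq_of_alloc_le (div_nonneg hw hcR.le) ((div_le_iff₀ hcR).2 hwp) hγ₀ hγ₁ hγ hwp
    (Nat.cast_nonneg _) hcR.le hx (gpaL_le b c γ d s i hγ₀ T)
  linarith [siteCost_gpaAlloc_le b c γ d s hw hp hc T]

lemma siteCost_gpaAlloc_le_of_gpaSupply_ne_zero {w p x : ℝ} {T : ℕ} {i : Fin n}
    (hT : gpaSupply b c γ d s T ≠ 0) (hw : 0 ≤ w) (hp : 0 ≤ p) (hwp : w ≤ p * c i)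
    (hc : 1 ≤ c i) (hγ₀ : 0 ≤ γ i) (hγ₁ : γ i ≤ 1)
    (hγ : p * (1 - γ i) + w / c i * γ i ≤ 4 / 3 * (w / c i)) (hx : 0 ≤ x)
    (hd : ∀ t ∈ Icc 1 T, d i t ≤ b i) :
    siteCost T w (c i) p (b i) (d i) (gpaAlloc b c γ d s i)
      ≤ 4 / 3 * (w / c i * x + p * max (cumDemand (d i) T - b i - x) 0)
        + 3 * p * (b i + c i) := by
  have hcR : (0 : ℝ) < c i := by exact_mod_cast hc
  have := cost_ineq_of_le_alloc (div_nonneg hw hcR.le) ((div_le_iff₀ hcR).2 hwp) hγ₀ hγ₁ hγ hwp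
    (Nat.cast_nonneg _) hcR.le hx (le_gpaL_of_gpaSupply_ne_zero b c γ d s hT hc hγ₀ hγ₁ hd)
  linarith [siteCost_gpaAlloc_le b c γ d s hw hp hc T]

end SiteBounds

/-- **4/3-approximation of GPA for OSSA.** Run GPA with thresholds
`γ i = min{1, p·c_i/(3w_i)}` (interpreted as `1` when `w i = 0`). Then for every
feasible offline allocation `ℓ*`,
`cost(ℓ) ≤ (4/3)·cost(ℓ*) + Σ_i 3p(b_i + c_i)`. -/
theorem gpa_four_thirds_approximation
    (n T : ℕ) (c b : Fin n → ℕ) (hc : ∀ i, 1 ≤ c i)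
    (w : Fin n → ℝ) (hw : ∀ i, 0 ≤ w i)
    (p : ℝ) (hp : 0 ≤ p) (hwp : ∀ i, w i ≤ p * c i)
    (s : ℕ) (d : Fin n → ℕ → ℕ) (hd : ∀ i, ∀ t ∈ Icc 1 T, d i t ≤ b i)
    (γ : Fin n → ℝ)
    (hγdef : γ = fun i => if w i = 0 then (1 : ℝ) else min 1 (p * c i / (3 * w i)))
    (ℓ : Fin n → ℕ → ℝ) (hℓ : ℓ = fun i t => gpaAlloc b c γ d s i t)
    (ℓs : Fin n → ℕ → ℝ) (hℓs : ∀ i, ∀ t ∈ Icc 1 T, 0 ≤ ℓs i t)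
    (hfeas : ∑ i, ∑ t ∈ Icc 1 T, ℓs i t ≤ (s : ℝ))
    :
    totalCost T w c b p d ℓ
      ≤ (4 / 3) * totalCost T w c b p d ℓs
        + ∑ i, 3 * p * ((b i : ℝ) + c i) := by
  subst hℓ
  have hγ i := gpaThreshold_spec (γ := γ i) (c := c i) (hw i) hp (by exact_mod_cast hc i)
    (by rw [hγdef])
  have hx i : 0 ≤ ∑ t ∈ Icc 1 T, ℓs i t := sum_nonneg (hℓs i)
  have hopt i := le_siteCost (b := b i) (d := d i) (c := c i) (hw i) hp (hℓs i)
  rw [totalCost_eq_sum_siteCost, totalCost_eq_sum_siteCost, mul_sum, ← sum_add_distrib]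
  by_cases hT : gpaSupply b c γ d s T = 0
  · have hsum : ∑ i, (gpaL b c γ d s i T : ℝ) = s := by
      have := gpaSupply_add_sum_gpaL b c γ d s T
      rw [hT, zero_add] at this
      exact_mod_cast this
    have hsite i : siteCost T (w i) (c i) p (b i) (d i) (gpaAlloc b c γ d s i)
          + p * gpaL b c γ d s i T
        ≤ 4 / 3 * siteCost T (w i) (c i) p (b i) (d i) (ℓs i) + 3 * p * (b i + c i)
          + p * ∑ t ∈ Icc 1 T, ℓs i t := by
      linarith [hopt i, siteCost_gpaAlloc_add_le b c γ d s (hw i) hp (hwp i) (hc i) (hγ i).1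
        (hγ i).2.1 (hγ i).2.2.1 (hx i) T]
    have key := sum_le_sum fun i (_ : i ∈ univ) => hsite i
    rw [sum_add_distrib, sum_add_distrib, ← mul_sum, ← mul_sum, hsum] at key
    linarith [mul_le_mul_of_nonneg_left hfeas hp]
  · exact sum_le_sum fun i _ => (siteCost_gpaAlloc_le_of_gpaSupply_ne_zero b c γ d s hT (hw i)
      hp (hwp i) (hc i) (hγ i).1 (hγ i).2.1 (hγ i).2.2.2 (hx i) (hd i)).trans (by linarith [hopt i])
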